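/- arXiv:2006.05559 — 2 statements merged into one kernel-verified Lean document; each statement's English description precedes it below -/
import Mathlib

section
/- For every φ ∈ L_ℝ^l(ℚ_p^N), B(φ,φ) = 2 p^{-lN} Σ_{r∈{1,2}} Σ_{j∈G_l^+} φ̂_r(j)² / ((γ/2)A_{w_δ}(‖j‖_p) + α_2/2); that is, in the coordinates (φ̂_1(j), φ̂_2(j))_{j∈G_l^+}, the restriction of B to L_ℝ^l is the quadratic form of the diagonal matrix 2p^{-lN}·B(l)^{-1}, where B(l) is diagonal with entry (γ/2)A_{w_δ}(‖j‖_p) + α_2/2 in the two coordinates attached to each j ∈ G_l^+. -/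
open MeasureTheory Filter

noncomputable instance (p : ℕ) [Fact p.Prime] : MeasurableSpace ℚ_[p] := borel _
instance (p : ℕ) [Fact p.Prime] : BorelSpace ℚ_[p] := ⟨rfl⟩

/-- Characteristic function (as a real-valued function) of the ball `i + p^l ℤ_p^N`. -/
noncomputable def ballInd (p N : ℕ) [Fact p.Prime] (l : ℕ) (i x : Fin N → ℚ_[p]) : ℝ :=
  Set.indicator {y : Fin N → ℚ_[p] | ‖y - i‖ ≤ (p : ℝ) ^ (-(l : ℤ))} (fun _ => (1 : ℝ)) x

/-- The test function with coefficients `c` on the set of representatives `G`. -/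
noncomputable def phiFun (p N : ℕ) [Fact p.Prime] (l : ℕ) (G : Finset (Fin N → ℚ_[p]))
    (c : (Fin N → ℚ_[p]) → ℝ) (x : Fin N → ℚ_[p]) : ℝ :=
  ∑ i ∈ G, c i * ballInd p N l i x

/-- The pairing `κ·x = Σ_j κ_j x_j` on `ℚ_p^N`. -/
noncomputable def dotp (p N : ℕ) [Fact p.Prime] (κ x : Fin N → ℚ_[p]) : ℚ_[p] :=
  ∑ j, κ j * x j

/-- The symbol `A_{w_δ}(κ) = ∫ (1 − χ_p(y·κ))/w_δ(‖y‖_p) d^N y`. -/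
noncomputable def Asymb (p N : ℕ) [Fact p.Prime] (μ : Measure (Fin N → ℚ_[p]))
    (χ : ℚ_[p] → ℂ) (w : (Fin N → ℚ_[p]) → ℝ) (κ : Fin N → ℚ_[p]) : ℂ :=
  ∫ y, (1 - χ (dotp p N y κ)) / ((w y : ℝ) : ℂ) ∂μ

/-- The discrete Fourier coefficient `φ̂(j) = p^{-lN} Σ_{i∈G} φ(i) χ_p(i·j)`. -/
noncomputable def hatCoef (p N : ℕ) [Fact p.Prime] (l : ℕ) (G : Finset (Fin N → ℚ_[p]))
    (χ : ℚ_[p] → ℂ) (c : (Fin N → ℚ_[p]) → ℝ) (j : Fin N → ℚ_[p]) : ℂ :=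
  ((p : ℂ) ^ (l * N))⁻¹ * ∑ i ∈ G, (c i : ℂ) * χ (dotp p N i j)

/-- Fourier transform of a real-valued test function. -/
noncomputable def FTr (p N : ℕ) [Fact p.Prime] (μ : Measure (Fin N → ℚ_[p]))
    (χ : ℚ_[p] → ℂ) (φ : (Fin N → ℚ_[p]) → ℝ) (κ : Fin N → ℚ_[p]) : ℂ :=
  ∫ x, χ (dotp p N κ x) * (φ x : ℂ) ∂μ

/-- The bilinear form `B(φ,θ)` (as a complex integral). -/
noncomputable def Bint (p N : ℕ) [Fact p.Prime] (μ : Measure (Fin N → ℚ_[p]))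
    (χ : ℚ_[p] → ℂ) (w : (Fin N → ℚ_[p]) → ℝ) (γ α₂ : ℝ)
    (φ θ : (Fin N → ℚ_[p]) → ℝ) : ℂ :=
  ∫ κ, FTr p N μ χ φ κ * (starRingEnd ℂ) (FTr p N μ χ θ κ) /
    ((γ : ℂ) / 2 * Asymb p N μ χ w κ + (α₂ : ℂ) / 2) ∂μ

open scoped ENNReal NNReal

section Basics
variable (p N : ℕ) [hp : Fact p.Prime]

lemma pR_pos : (0:ℝ) < p := by exact_mod_cast hp.out.pos
lemma one_lt_pR : (1:ℝ) < p := by exact_mod_cast hp.out.one_lt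

lemma pnorm_add_le (x y : Fin N → ℚ_[p]) : ‖x + y‖ ≤ max ‖x‖ ‖y‖ := by
  refine pi_norm_le_iff_of_nonneg (le_max_of_le_left (norm_nonneg _)) |>.2 fun i => ?_
  refine (Padic.nonarchimedean _ _).trans ?_
  exact max_le_max (norm_le_pi_norm x i) (norm_le_pi_norm y i)

lemma pnorm_eq_of_sub_lt {x y : Fin N → ℚ_[p]} (h : ‖x - y‖ < ‖y‖) : ‖x‖ = ‖y‖ := by
  have h1 : ‖x‖ ≤ ‖y‖ := by
    have := pnorm_add_le p N (x - y) y
    simpa [max_le_iff, h.le] using this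
  rcases lt_or_eq_of_le h1 with h2 | h2
  · exfalso
    have := pnorm_add_le p N (y - x) x
    simp only [sub_add_cancel] at this
    have hyx : ‖y - x‖ = ‖x - y‖ := by rw [← norm_neg]; ring_nf
    rcases max_cases ‖y-x‖ ‖x‖ with ⟨he, _⟩ | ⟨he, _⟩ <;> rw [he] at this
    · rw [hyx] at this; exact absurd this (not_le.2 h)
    · exact absurd this (not_le.2 h2)
  · exact h2

lemma dotp_comm (κ x : Fin N → ℚ_[p]) : dotp p N κ x = dotp p N x κ := by
  unfold dotp; exact Finset.sum_congr rfl fun i _ => mul_comm _ _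

lemma dotp_add_right (y κ κ' : Fin N → ℚ_[p]) :
    dotp p N y (κ + κ') = dotp p N y κ + dotp p N y κ' := by
  unfold dotp; rw [← Finset.sum_add_distrib]
  exact Finset.sum_congr rfl fun i _ => by simp [Pi.add_apply, mul_add]

lemma dotp_sub_right (y κ κ' : Fin N → ℚ_[p]) :
    dotp p N y (κ - κ') = dotp p N y κ - dotp p N y κ' := by
  unfold dotp; rw [← Finset.sum_sub_distrib]
  exact Finset.sum_congr rfl fun i _ => by simp [Pi.sub_apply, mul_sub]

lemma dotp_neg_left (y κ : Fin N → ℚ_[p]) : dotp p N (-y) κ = - dotp p N y κ := by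
  unfold dotp; rw [← Finset.sum_neg_distrib]
  exact Finset.sum_congr rfl fun i _ => by simp

lemma dotp_neg_right (y κ : Fin N → ℚ_[p]) : dotp p N y (-κ) = - dotp p N y κ := by
  rw [dotp_comm, dotp_neg_left, dotp_comm]

lemma dotp_add_left (x y κ : Fin N → ℚ_[p]) :
    dotp p N (x + y) κ = dotp p N x κ + dotp p N y κ := by
  rw [dotp_comm, dotp_add_right, dotp_comm p N κ x, dotp_comm p N κ y]

lemma dotp_norm_le (y κ : Fin N → ℚ_[p]) : ‖dotp p N y κ‖ ≤ ‖y‖ * ‖κ‖ := by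
  unfold dotp
  refine (IsUltrametricDist.norm_sum_le_of_forall_le_of_nonneg ?_ fun i _ => ?_)
  · positivity
  · calc ‖y i * κ i‖ = ‖y i‖ * ‖κ i‖ := norm_mul _ _
      _ ≤ ‖y‖ * ‖κ‖ := by
        exact mul_le_mul (norm_le_pi_norm y i) (norm_le_pi_norm κ i) (norm_nonneg _) (norm_nonneg _)

lemma dotp_continuous (κ : Fin N → ℚ_[p]) : Continuous (fun x => dotp p N κ x) := by
  unfold dotp
  exact continuous_finset_sum _ fun i _ => (continuous_const.mul (continuous_apply i))

end Basics

section Chi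
variable {p : ℕ} [hp : Fact p.Prime] (χ : ℚ_[p] → ℂ)
  (hχ_add : ∀ a b, χ (a + b) = χ a * χ b)
  (hχ_ker : ∀ a : ℚ_[p], χ a = 1 ↔ ‖a‖ ≤ 1)
  (hχ_abs : ∀ a : ℚ_[p], ‖χ a‖ = 1)

include hχ_ker in
lemma chi_zero : χ 0 = 1 := (hχ_ker 0).2 (by simp)

include hχ_abs in
lemma chi_ne_zero (a : ℚ_[p]) : χ a ≠ 0 := by
  intro h
  have := hχ_abs a
  rw [h] at this
  simpa using this

include hχ_add hχ_ker hχ_abs in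
lemma chi_neg (a : ℚ_[p]) : χ (-a) = (starRingEnd ℂ) (χ a) := by
  have h1 : χ a * χ (-a) = 1 := by rw [← hχ_add]; simp [chi_zero χ hχ_ker]
  have h3 : (starRingEnd ℂ) (χ a) * χ a = 1 := by
    have := Complex.normSq_eq_norm_sq (χ a)
    rw [hχ_abs a] at this
    rw [← Complex.normSq_eq_conj_mul_self] at *
    exact_mod_cast by rw [this]; norm_num
  calc χ (-a) = ((starRingEnd ℂ) (χ a) * χ a) * χ (-a) := by rw [h3, one_mul]
    _ = (starRingEnd ℂ) (χ a) * (χ a * χ (-a)) := by ring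
    _ = (starRingEnd ℂ) (χ a) := by rw [h1, mul_one]

include hχ_add hχ_ker in
lemma chi_eq_of_close (a b : ℚ_[p]) (h : ‖a - b‖ ≤ 1) : χ a = χ b := by
  have : χ a = χ (b + (a - b)) := by ring_nf
  rw [this, hχ_add, (hχ_ker _).2 h, mul_one]

include hχ_add hχ_ker in
lemma chi_continuous : Continuous χ := by
  rw [continuous_iff_continuousAt]
  intro a
  have h : χ =ᶠ[nhds a] fun _ => χ a := by
    filter_upwards [Metric.closedBall_mem_nhds a one_pos] with x hx
    exact chi_eq_of_close χ hχ_add hχ_ker x a (by simpa [dist_eq_norm] using hx)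
  exact continuousAt_const.congr h.symm

end Chi

section Meas
variable (p N : ℕ) [hp : Fact p.Prime] (l : ℕ)
  (μ : Measure (Fin N → ℚ_[p])) [μ.IsAddHaarMeasure]

lemma cball_eq_set (i : Fin N → ℚ_[p]) (r : ℝ) :
    {y : Fin N → ℚ_[p] | ‖y - i‖ ≤ r} = Metric.closedBall i r := by
  ext y; simp [Metric.mem_closedBall, dist_eq_norm]

lemma measure_cball_translate (i : Fin N → ℚ_[p]) (r : ℝ) :
    μ (Metric.closedBall i r) = μ (Metric.closedBall 0 r) := by
  have : Metric.closedBall i r = (fun x => x + (-i)) ⁻¹' (Metric.closedBall 0 r) := by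
    ext y; simp [Metric.mem_closedBall, dist_eq_norm, sub_eq_add_neg]
  rw [this, measure_preimage_add_right]

lemma measure_smallball (hμ1 : μ (Metric.closedBall 0 1) = 1) :
    μ (Metric.closedBall (0 : Fin N → ℚ_[p]) ((p:ℝ) ^ (-(l:ℤ)))) = ((p : ℝ≥0∞) ^ (l*N))⁻¹ := by
  classical
  set r : ℝ := (p:ℝ) ^ (-(l:ℤ)) with hr
  set rep : (Fin N → Fin (p^l)) → (Fin N → ℚ_[p]) := fun a i => ((a i : ℕ) : ℚ_[p]) with hrep
  have hple : (1:ℝ) < p := by exact_mod_cast hp.out.one_lt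
  have hr1 : r ≤ 1 := zpow_le_one_of_nonpos₀ hple.le (by simp)
  -- cover
  have hcover : Metric.closedBall (0 : Fin N → ℚ_[p]) 1 =
      ⋃ a : (Fin N → Fin (p^l)), Metric.closedBall (rep a) r := by
    ext x
    simp only [Metric.mem_closedBall, dist_eq_norm, sub_zero, Set.mem_iUnion]
    constructor
    · intro hx
      have hxi : ∀ i, ‖x i‖ ≤ 1 := fun i => (norm_le_pi_norm x i).trans hx
      set z : ∀ _ : Fin N, ℤ_[p] := fun i => ⟨x i, hxi i⟩ with hz
      refine ⟨fun i => ⟨(z i).appr l, PadicInt.appr_lt _ _⟩, ?_⟩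
      refine pi_norm_le_iff_of_nonneg (by positivity) |>.2 fun i => ?_
      have h1 : ‖z i - ((z i).appr l : ℤ_[p])‖ ≤ (p:ℝ) ^ (-(l:ℤ)) :=
        (PadicInt.norm_le_pow_iff_mem_span_pow _ l).2 (PadicInt.appr_spec l (z i))
      have h2 : ((z i - ((z i).appr l : ℤ_[p]) : ℤ_[p]) : ℚ_[p]) = x i - (((z i).appr l : ℕ) : ℚ_[p]) := by
        push_cast [hz]; rfl
      calc ‖x i - rep (fun i => ⟨(z i).appr l, PadicInt.appr_lt _ _⟩) i‖
          = ‖((z i - ((z i).appr l : ℤ_[p]) : ℤ_[p]) : ℚ_[p])‖ := by rw [h2]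
        _ = ‖z i - ((z i).appr l : ℤ_[p])‖ := PadicInt.padic_norm_e_of_padicInt _
        _ ≤ r := h1
    · rintro ⟨a, ha⟩
      have hrepa : ‖rep a‖ ≤ 1 := by
        refine pi_norm_le_iff_of_nonneg zero_le_one |>.2 fun i => ?_
        have : ((a i : ℕ) : ℚ_[p]) = (((a i : ℕ) : ℤ) : ℚ_[p]) := by push_cast; rfl
        rw [hrep]; simp only [this]
        exact Padic.norm_int_le_one _
      calc ‖x‖ = ‖(x - rep a) + rep a‖ := by ring_nf
        _ ≤ max ‖x - rep a‖ ‖rep a‖ := by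
            refine pi_norm_le_iff_of_nonneg (le_max_of_le_left (norm_nonneg _)) |>.2 fun i => ?_
            refine (Padic.nonarchimedean _ _).trans ?_
            exact max_le_max (norm_le_pi_norm _ i) (norm_le_pi_norm _ i)
        _ ≤ 1 := max_le (ha.trans hr1) hrepa
  -- disjoint
  have hdisj : Pairwise (Function.onFun Disjoint
      (fun a : (Fin N → Fin (p^l)) => Metric.closedBall (rep a) r)) := by
    intro a b hab
    refine Set.disjoint_left.2 fun x hxa hxb => hab ?_
    funext i
    simp only [Metric.mem_closedBall, dist_eq_norm] at hxa hxb
    have h1 : ‖rep a - rep b‖ ≤ r := by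
      calc ‖rep a - rep b‖ = ‖(rep a - x) + (x - rep b)‖ := by ring_nf
        _ ≤ max ‖rep a - x‖ ‖x - rep b‖ := by
            refine pi_norm_le_iff_of_nonneg (le_max_of_le_left (norm_nonneg _)) |>.2 fun i => ?_
            refine (Padic.nonarchimedean _ _).trans ?_
            exact max_le_max (norm_le_pi_norm _ i) (norm_le_pi_norm _ i)
        _ ≤ r := by
            rw [← norm_neg (rep a - x)]
            refine max_le (by simpa [neg_sub] using hxa) hxb
    have h2 : ‖rep a i - rep b i‖ ≤ r := by
      calc ‖rep a i - rep b i‖ = ‖(rep a - rep b) i‖ := by simp [Pi.sub_apply]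
        _ ≤ r := (norm_le_pi_norm _ i).trans h1
    have h3 : (((a i : ℕ) : ℤ) - ((b i : ℕ) : ℤ) : ℤ) = 0 := by
      have hcast : ((((a i : ℕ) : ℤ) - ((b i : ℕ) : ℤ) : ℤ) : ℚ_[p]) = rep a i - rep b i := by
        push_cast [hrep]; ring
      have hdvd : ((p:ℤ) ^ l) ∣ (((a i : ℕ) : ℤ) - ((b i : ℕ) : ℤ)) := by
        rw [← Padic.norm_int_le_pow_iff_dvd]
        rw [hcast]; exact h2
      refine Int.eq_zero_of_abs_lt_dvd hdvd ?_
      have h4 : ((a i : ℕ) : ℤ) < (p:ℤ)^l := by exact_mod_cast (a i).2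
      have h5 : ((b i : ℕ) : ℤ) < (p:ℤ)^l := by exact_mod_cast (b i).2
      rw [abs_sub_lt_iff]
      omega
    have := sub_eq_zero.1 h3
    exact Fin.ext (by exact_mod_cast this)
  -- measure computation
  have hmeas : ∀ a : (Fin N → Fin (p^l)), MeasurableSet (Metric.closedBall (rep a) r) :=
    fun a => Metric.isClosed_closedBall.measurableSet
  have hcount := measure_iUnion (μ := μ) hdisj hmeas
  rw [← hcover, hμ1, tsum_fintype] at hcount
  have hval : ∀ a : (Fin N → Fin (p^l)), μ (Metric.closedBall (rep a) r)
      = μ (Metric.closedBall 0 r) := fun a => measure_cball_translate p N μ _ _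
  rw [Finset.sum_congr rfl (fun a _ => hval a), Finset.sum_const] at hcount
  have hcard : (Finset.univ : Finset (Fin N → Fin (p^l))).card = p ^ (l*N) := by
    simp [Finset.card_univ, Fintype.card_fun, ← pow_mul, mul_comm]
  rw [hcard] at hcount
  have hc0 : ((p:ℝ≥0∞) ^ (l*N)) ≠ 0 := by
    simp [pow_ne_zero_iff, Nat.cast_ne_zero, hp.out.ne_zero]
  have hctop : ((p:ℝ≥0∞) ^ (l*N)) ≠ ⊤ := by
    exact ENNReal.pow_ne_top (ENNReal.natCast_ne_top p)
  have hsmul : (p ^ (l*N) : ℕ) • μ (Metric.closedBall (0:Fin N → ℚ_[p]) r)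
      = ((p:ℝ≥0∞) ^ (l*N)) * μ (Metric.closedBall 0 r) := by
    rw [nsmul_eq_mul]; push_cast; ring
  rw [hsmul] at hcount
  calc μ (Metric.closedBall (0:Fin N → ℚ_[p]) r)
      = ((p:ℝ≥0∞) ^ (l*N))⁻¹ * (((p:ℝ≥0∞) ^ (l*N)) * μ (Metric.closedBall 0 r)) := by
        rw [← mul_assoc, ENNReal.inv_mul_cancel hc0 hctop, one_mul]
    _ = ((p:ℝ≥0∞) ^ (l*N))⁻¹ := by rw [← hcount, mul_one]

end Meas


section IntChar
variable (p N : ℕ) [hp : Fact p.Prime] (l : ℕ)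
  (μ : Measure (Fin N → ℚ_[p])) [μ.IsAddHaarMeasure]
  (χ : ℚ_[p] → ℂ)
  (hχ_add : ∀ a b, χ (a + b) = χ a * χ b)
  (hχ_ker : ∀ a : ℚ_[p], χ a = 1 ↔ ‖a‖ ≤ 1)

include hχ_ker in
lemma int_char_small_le (hμ1 : μ (Metric.closedBall 0 1) = 1) (κ : Fin N → ℚ_[p])
    (hκ : ‖κ‖ ≤ (p:ℝ) ^ (l:ℤ)) :
    ∫ x, (Metric.closedBall (0 : Fin N → ℚ_[p]) ((p:ℝ) ^ (-(l:ℤ)))).indicator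
      (fun y => χ (dotp p N κ y)) x ∂μ = ((((p:ℝ) ^ (l*N))⁻¹ : ℝ) : ℂ) := by
  have hp0 : (p:ℝ) ≠ 0 := ne_of_gt (pR_pos p)
  have hcongr : (Metric.closedBall (0 : Fin N → ℚ_[p]) ((p:ℝ) ^ (-(l:ℤ)))).indicator
      (fun y => χ (dotp p N κ y)) = (Metric.closedBall (0 : Fin N → ℚ_[p]) ((p:ℝ) ^ (-(l:ℤ)))).indicator
      (fun _ => (1:ℂ)) := by
    refine Set.indicator_congr fun y hy => ?_
    simp only [Metric.mem_closedBall, dist_eq_norm, sub_zero] at hy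
    refine (hχ_ker _).2 ?_
    calc ‖dotp p N κ y‖ ≤ ‖κ‖ * ‖y‖ := dotp_norm_le p N κ y
      _ ≤ (p:ℝ) ^ (l:ℤ) * (p:ℝ) ^ (-(l:ℤ)) := by
          exact mul_le_mul hκ hy (norm_nonneg _) (by positivity)
      _ = 1 := by rw [← zpow_add₀ hp0]; simp
  rw [hcongr, integral_indicator_const _ Metric.isClosed_closedBall.measurableSet, measureReal_def,
    measure_smallball p N l μ hμ1]
  simp [ENNReal.toReal_inv, ENNReal.toReal_pow, Complex.real_smul]

include hχ_add hχ_ker in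
lemma int_char_small_gt (κ : Fin N → ℚ_[p]) (hκ : ¬ ‖κ‖ ≤ (p:ℝ) ^ (l:ℤ)) :
    ∫ x, (Metric.closedBall (0 : Fin N → ℚ_[p]) ((p:ℝ) ^ (-(l:ℤ)))).indicator
      (fun y => χ (dotp p N κ y)) x ∂μ = 0 := by
  classical
  have hp0 : (p:ℝ) ≠ 0 := ne_of_gt (pR_pos p)
  push_neg at hκ
  -- N ≥ 1 since ‖κ‖ > 0
  have hκ0 : 0 < ‖κ‖ := lt_trans (by positivity) hκ
  have hNe : Nonempty (Fin N) := by
    by_contra h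
    rw [not_nonempty_iff] at h
    have : κ = 0 := funext fun i => (h.false i).elim
    rw [this] at hκ0; simp at hκ0
  -- index attaining the sup
  obtain ⟨a, -, ha⟩ := Finset.exists_mem_eq_sup (Finset.univ : Finset (Fin N))
    Finset.univ_nonempty (fun i => ‖κ i‖₊)
  have hκa : ‖κ‖ = ‖κ a‖ := by
    have := congrArg (fun t : ℝ≥0 => (t:ℝ)) (Pi.nnnorm_def κ ▸ ha ▸ rfl : ‖κ‖₊ = ‖κ a‖₊)
    simpa using this
  set y₀ : Fin N → ℚ_[p] := Pi.single a ((p:ℚ_[p])^l) with hy₀def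
  have hy₀norm : ‖y₀‖ ≤ (p:ℝ) ^ (-(l:ℤ)) := by
    refine pi_norm_le_iff_of_nonneg (by positivity) |>.2 fun i => ?_
    rw [hy₀def]
    by_cases h : i = a
    · subst h
      rw [Pi.single_eq_same, Padic.norm_p_pow]
    · rw [Pi.single_eq_of_ne h, norm_zero]
      positivity
  have hdot : dotp p N κ y₀ = κ a * (p:ℚ_[p])^l := by
    unfold dotp
    rw [Finset.sum_eq_single a]
    · simp [hy₀def]
    · intro b _ hb; simp [hy₀def, Pi.single_apply, hb]
    · simp
  have hnormdot : ¬ ‖dotp p N κ y₀‖ ≤ 1 := by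
    rw [hdot]
    push_neg
    rw [norm_mul, Padic.norm_p_pow, ← hκa]
    calc (1:ℝ) = (p:ℝ) ^ (l:ℤ) * (p:ℝ) ^ (-(l:ℤ)) := by rw [← zpow_add₀ hp0]; simp
      _ < ‖κ‖ * (p:ℝ) ^ (-(l:ℤ)) := by
          exact mul_lt_mul_of_pos_right hκ (by positivity)
  have hne : χ (dotp p N κ y₀) ≠ 1 := fun h => hnormdot ((hχ_ker _).1 h)
  set SB := Metric.closedBall (0 : Fin N → ℚ_[p]) ((p:ℝ) ^ (-(l:ℤ))) with hSB
  have hmem : ∀ x : Fin N → ℚ_[p], x + y₀ ∈ SB ↔ x ∈ SB := by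
    intro x
    simp only [hSB, Metric.mem_closedBall, dist_eq_norm, sub_zero]
    constructor
    · intro h
      calc ‖x‖ = ‖(x + y₀) + (-y₀)‖ := by ring_nf
        _ ≤ max ‖x + y₀‖ ‖-y₀‖ := pnorm_add_le p N _ _
        _ ≤ (p:ℝ) ^ (-(l:ℤ)) := max_le h (by rwa [norm_neg])
    · intro h
      calc ‖x + y₀‖ ≤ max ‖x‖ ‖y₀‖ := pnorm_add_le p N _ _
        _ ≤ (p:ℝ) ^ (-(l:ℤ)) := max_le h hy₀norm
  set F : (Fin N → ℚ_[p]) → ℂ := fun x => SB.indicator (fun y => χ (dotp p N κ y)) x with hF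
  have hkey : ∀ x, F (x + y₀) = χ (dotp p N κ y₀) * F x := by
    intro x
    by_cases hx : x ∈ SB
    · rw [hF]
      simp only [Set.indicator_of_mem ((hmem x).2 hx), Set.indicator_of_mem hx]
      rw [dotp_comm, dotp_add_left, hχ_add, dotp_comm p N x κ, dotp_comm p N y₀ κ, mul_comm]
    · rw [hF]
      simp only [Set.indicator_of_notMem (fun h => hx ((hmem x).1 h)),
        Set.indicator_of_notMem hx, mul_zero]
  have heq : ∫ x, F x ∂μ = χ (dotp p N κ y₀) * ∫ x, F x ∂μ := by
    conv_lhs => rw [← integral_add_right_eq_self F y₀]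
    simp_rw [hkey]
    rw [integral_const_mul]
  have := sub_eq_zero.2 heq
  rw [← one_mul (∫ x, F x ∂μ)] at this
  nth_rewrite 2 [← mul_comm] at this
  have h2 : (1 - χ (dotp p N κ y₀)) * ∫ x, F x ∂μ = 0 := by
    rw [sub_mul]; linear_combination this
  rcases mul_eq_zero.1 h2 with h | h
  · exact absurd (sub_eq_zero.1 h).symm hne
  · exact h

end IntChar


section FTrSec
variable (p N : ℕ) [hp : Fact p.Prime] (l : ℕ)
  (μ : Measure (Fin N → ℚ_[p])) [μ.IsAddHaarMeasure]
  (χ : ℚ_[p] → ℂ)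
  (hχ_add : ∀ a b, χ (a + b) = χ a * χ b)
  (hχ_ker : ∀ a : ℚ_[p], χ a = 1 ↔ ‖a‖ ≤ 1)
  (hμ1 : μ (Metric.closedBall 0 1) = 1)

lemma ballInd_cast (i x : Fin N → ℚ_[p]) : ((ballInd p N l i x : ℝ) : ℂ) =
    (Metric.closedBall i ((p:ℝ) ^ (-(l:ℤ)))).indicator (fun _ => (1:ℂ)) x := by
  unfold ballInd
  rw [cball_eq_set]
  by_cases hx : x ∈ Metric.closedBall i ((p:ℝ) ^ (-(l:ℤ)))
  · rw [Set.indicator_of_mem hx, Set.indicator_of_mem hx]; norm_num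
  · rw [Set.indicator_of_notMem hx, Set.indicator_of_notMem hx]; norm_num

lemma ballInd_real (i x : Fin N → ℚ_[p]) : ballInd p N l i x =
    (Metric.closedBall i ((p:ℝ) ^ (-(l:ℤ)))).indicator (fun _ => (1:ℝ)) x := by
  unfold ballInd; rw [cball_eq_set]

lemma char_ball_integrand (i κ : Fin N → ℚ_[p]) :
    (fun x => χ (dotp p N κ x) * ((ballInd p N l i x : ℝ) : ℂ)) =
    fun x => (Metric.closedBall i ((p:ℝ) ^ (-(l:ℤ)))).indicator (fun y => χ (dotp p N κ y)) x := by
  funext x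
  rw [ballInd_cast]
  by_cases hx : x ∈ Metric.closedBall i ((p:ℝ) ^ (-(l:ℤ)))
  · rw [Set.indicator_of_mem hx, Set.indicator_of_mem hx, mul_one]
  · rw [Set.indicator_of_notMem hx, Set.indicator_of_notMem hx, mul_zero]

include hχ_add in
lemma int_char_ball (i κ : Fin N → ℚ_[p]) :
    ∫ x, χ (dotp p N κ x) * ((ballInd p N l i x : ℝ) : ℂ) ∂μ =
    χ (dotp p N κ i) * ∫ x, (Metric.closedBall (0 : Fin N → ℚ_[p]) ((p:ℝ) ^ (-(l:ℤ)))).indicator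
      (fun y => χ (dotp p N κ y)) x ∂μ := by
  rw [char_ball_integrand p N l χ]
  set F : (Fin N → ℚ_[p]) → ℂ :=
    fun x => (Metric.closedBall i ((p:ℝ) ^ (-(l:ℤ)))).indicator (fun y => χ (dotp p N κ y)) x with hF
  have hkey : ∀ x, F (x + i) = χ (dotp p N κ i) *
      (Metric.closedBall (0 : Fin N → ℚ_[p]) ((p:ℝ) ^ (-(l:ℤ)))).indicator
      (fun y => χ (dotp p N κ y)) x := by
    intro x
    have hmem : x + i ∈ Metric.closedBall i ((p:ℝ) ^ (-(l:ℤ))) ↔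
        x ∈ Metric.closedBall (0 : Fin N → ℚ_[p]) ((p:ℝ) ^ (-(l:ℤ))) := by
      simp [Metric.mem_closedBall, dist_eq_norm]
    by_cases hx : x ∈ Metric.closedBall (0 : Fin N → ℚ_[p]) ((p:ℝ) ^ (-(l:ℤ)))
    · rw [hF]
      simp only [Set.indicator_of_mem (hmem.2 hx), Set.indicator_of_mem hx]
      rw [dotp_add_right, hχ_add, mul_comm]
    · rw [hF]
      simp only [Set.indicator_of_notMem (fun h => hx (hmem.1 h)),
        Set.indicator_of_notMem hx, mul_zero]
  rw [← integral_add_right_eq_self F i]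
  simp_rw [hkey]
  rw [integral_const_mul]

include hχ_add hχ_ker in
lemma integrable_char_ball (i κ : Fin N → ℚ_[p]) (a : ℂ) :
    Integrable (fun x => a * ((Metric.closedBall i ((p:ℝ) ^ (-(l:ℤ)))).indicator
      (fun y => χ (dotp p N κ y)) x)) μ := by
  have heq : (fun x => a * ((Metric.closedBall i ((p:ℝ) ^ (-(l:ℤ)))).indicator
      (fun y => χ (dotp p N κ y)) x)) = (Metric.closedBall i ((p:ℝ) ^ (-(l:ℤ)))).indicator
      (fun y => a * χ (dotp p N κ y)) := by
    funext x
    by_cases hx : x ∈ Metric.closedBall i ((p:ℝ) ^ (-(l:ℤ)))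
    · rw [Set.indicator_of_mem hx, Set.indicator_of_mem hx]
    · rw [Set.indicator_of_notMem hx, Set.indicator_of_notMem hx, mul_zero]
  rw [heq, integrable_indicator_iff Metric.isClosed_closedBall.measurableSet]
  refine ContinuousOn.integrableOn_compact (isCompact_closedBall i _) ?_
  exact (continuous_const.mul ((chi_continuous χ hχ_add hχ_ker).comp
    (dotp_continuous p N κ))).continuousOn

include hχ_add hχ_ker in
lemma integrable_ballInd_c (i : Fin N → ℚ_[p]) (a : ℝ) :
    Integrable (fun x => a * ballInd p N l i x) μ := by
  have heq : (fun x => a * ballInd p N l i x) = (Metric.closedBall i ((p:ℝ) ^ (-(l:ℤ)))).indicator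
      (fun _ => a) := by
    funext x
    rw [ballInd_real]
    by_cases hx : x ∈ Metric.closedBall i ((p:ℝ) ^ (-(l:ℤ)))
    · rw [Set.indicator_of_mem hx, Set.indicator_of_mem hx, mul_one]
    · rw [Set.indicator_of_notMem hx, Set.indicator_of_notMem hx, mul_zero]
  rw [heq, integrable_indicator_iff Metric.isClosed_closedBall.measurableSet]
  exact continuousOn_const.integrableOn_compact (isCompact_closedBall i _)

include hχ_add hχ_ker in
lemma FTr_phi (G : Finset (Fin N → ℚ_[p])) (c : (Fin N → ℚ_[p]) → ℝ) (κ : Fin N → ℚ_[p]) :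
    FTr p N μ χ (phiFun p N l G c) κ = (∑ i ∈ G, (c i : ℂ) * χ (dotp p N κ i)) *
      ∫ x, (Metric.closedBall (0 : Fin N → ℚ_[p]) ((p:ℝ) ^ (-(l:ℤ)))).indicator
      (fun y => χ (dotp p N κ y)) x ∂μ := by
  unfold FTr phiFun
  have hieq : ∀ x : Fin N → ℚ_[p], χ (dotp p N κ x) * ((∑ i ∈ G, c i * ballInd p N l i x : ℝ) : ℂ)
      = ∑ i ∈ G, (c i : ℂ) * ((Metric.closedBall i ((p:ℝ) ^ (-(l:ℤ)))).indicator
        (fun y => χ (dotp p N κ y)) x) := by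
    intro x
    push_cast
    rw [Finset.mul_sum]
    refine Finset.sum_congr rfl fun i _ => ?_
    have := congrFun (char_ball_integrand p N l χ i κ) x
    calc χ (dotp p N κ x) * ((c i : ℂ) * ((ballInd p N l i x : ℝ) : ℂ))
        = (c i : ℂ) * (χ (dotp p N κ x) * ((ballInd p N l i x : ℝ) : ℂ)) := by ring
      _ = _ := by rw [this]
  simp_rw [hieq]
  rw [integral_finset_sum _ (fun i _ => integrable_char_ball p N l μ χ hχ_add hχ_ker i κ _)]
  rw [Finset.sum_mul]
  refine Finset.sum_congr rfl fun i _ => ?_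
  have h2 : ∫ x, (Metric.closedBall i ((p:ℝ) ^ (-(l:ℤ)))).indicator
      (fun y => χ (dotp p N κ y)) x ∂μ = χ (dotp p N κ i) *
      ∫ x, (Metric.closedBall (0 : Fin N → ℚ_[p]) ((p:ℝ) ^ (-(l:ℤ)))).indicator
      (fun y => χ (dotp p N κ y)) x ∂μ := by
    rw [← int_char_ball p N l μ χ hχ_add i κ, char_ball_integrand p N l χ]
  rw [integral_const_mul, h2]
  ring

include hχ_add hχ_ker hμ1 in
lemma FTr_phi_le (G : Finset (Fin N → ℚ_[p])) (c : (Fin N → ℚ_[p]) → ℝ) (κ : Fin N → ℚ_[p])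
    (hκ : ‖κ‖ ≤ (p:ℝ) ^ (l:ℤ)) :
    FTr p N μ χ (phiFun p N l G c) κ =
      (∑ i ∈ G, (c i : ℂ) * χ (dotp p N κ i)) * ((((p:ℝ) ^ (l*N))⁻¹ : ℝ) : ℂ) := by
  rw [FTr_phi p N l μ χ hχ_add hχ_ker G c κ,
    int_char_small_le p N l μ χ hχ_ker hμ1 κ hκ]

include hχ_add hχ_ker in
lemma FTr_phi_gt (G : Finset (Fin N → ℚ_[p])) (c : (Fin N → ℚ_[p]) → ℝ) (κ : Fin N → ℚ_[p])
    (hκ : ¬ ‖κ‖ ≤ (p:ℝ) ^ (l:ℤ)) :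
    FTr p N μ χ (phiFun p N l G c) κ = 0 := by
  rw [FTr_phi p N l μ χ hχ_add hχ_ker G c κ,
    int_char_small_gt p N l μ χ hχ_add hχ_ker κ hκ, mul_zero]

include hχ_add hχ_ker hμ1 in
lemma sum_c_zero (G : Finset (Fin N → ℚ_[p])) (c : (Fin N → ℚ_[p]) → ℝ)
    (hmean : ∫ x, phiFun p N l G c x ∂μ = 0) : ∑ i ∈ G, c i = 0 := by
  have hball : ∀ i : Fin N → ℚ_[p], ∫ x, c i * ballInd p N l i x ∂μ
      = c i * (((p:ℝ) ^ (l*N))⁻¹ : ℝ) := by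
    intro i
    have heq : (fun x => c i * ballInd p N l i x) = (Metric.closedBall i ((p:ℝ) ^ (-(l:ℤ)))).indicator
        (fun _ => c i) := by
      funext x
      rw [ballInd_real]
      by_cases hx : x ∈ Metric.closedBall i ((p:ℝ) ^ (-(l:ℤ)))
      · rw [Set.indicator_of_mem hx, Set.indicator_of_mem hx, mul_one]
      · rw [Set.indicator_of_notMem hx, Set.indicator_of_notMem hx, mul_zero]
    rw [heq, integral_indicator_const _ Metric.isClosed_closedBall.measurableSet, measureReal_def,
      measure_cball_translate, measure_smallball p N l μ hμ1]
    rw [smul_eq_mul, mul_comm]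
    congr 1
    simp [ENNReal.toReal_inv, ENNReal.toReal_pow]
  have h1 : ∫ x, phiFun p N l G c x ∂μ = ∑ i ∈ G, c i * (((p:ℝ) ^ (l*N))⁻¹ : ℝ) := by
    unfold phiFun
    rw [integral_finset_sum _ (fun i _ => integrable_ballInd_c p N l μ χ hχ_add hχ_ker i (c i))]
    exact Finset.sum_congr rfl fun i _ => hball i
  rw [h1, ← Finset.sum_mul] at hmean
  have hp0 : (0:ℝ) < p := pR_pos p
  have hpos : (((p:ℝ) ^ (l*N))⁻¹ : ℝ) ≠ 0 := by positivity
  exact (mul_eq_zero.1 hmean).resolve_right hpos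

end FTrSec

section AsymbSec
variable (p N : ℕ) [hp : Fact p.Prime]
  (μ : Measure (Fin N → ℚ_[p])) [μ.IsAddHaarMeasure]
  (χ : ℚ_[p] → ℂ)
  (w : (Fin N → ℚ_[p]) → ℝ)
  (hrad : ∀ x y : Fin N → ℚ_[p], ‖x‖ = ‖y‖ → w x = w y)

lemma qnorm_eq_of_sub_lt {x y : ℚ_[p]} (h : ‖x - y‖ < ‖y‖) : ‖x‖ = ‖y‖ := by
  have h1 : ‖x‖ ≤ ‖y‖ := by
    have := Padic.nonarchimedean (x - y) y
    simpa [max_le_iff, h.le] using this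
  rcases lt_or_eq_of_le h1 with h2 | h2
  · exfalso
    have h3 := Padic.nonarchimedean (y - x) x
    rw [sub_add_cancel] at h3
    have hyx : ‖y - x‖ = ‖x - y‖ := by rw [← norm_neg]; ring_nf
    rcases max_cases ‖y - x‖ ‖x‖ with ⟨he, _⟩ | ⟨he, _⟩ <;> rw [he] at h3
    · rw [hyx] at h3; exact absurd h3 (not_le.2 h)
    · exact absurd h3 (not_le.2 h2)
  · exact h2

include hrad in
lemma Asymb_neg (j : Fin N → ℚ_[p]) : Asymb p N μ χ w (-j) = Asymb p N μ χ w j := by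
  unfold Asymb
  rw [← integral_neg_eq_self (fun y => (1 - χ (dotp p N y (-j))) / ((w y : ℝ) : ℂ)) μ]
  congr 1
  funext y
  rw [dotp_neg_left, dotp_neg_right, neg_neg, hrad (-y) y (by rw [norm_neg])]

lemma dotp_sub_single (a : Fin N) (t : ℚ_[p]) (y v : Fin N → ℚ_[p]) :
    dotp p N (fun i => y i - if i = a then t else 0) v = dotp p N y v - t * v a := by
  unfold dotp
  have h1 : ∀ i : Fin N, (y i - if i = a then t else 0) * v i
      = y i * v i - (if i = a then t * v i else 0) := by
    intro i; by_cases h : i = a <;> simp [h, sub_mul]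
  simp_rw [h1]
  rw [Finset.sum_sub_distrib]
  congr 1
  rw [Finset.sum_ite_eq' Finset.univ a (fun i => t * v i)]
  simp

lemma dotp_add_single (a : Fin N) (t : ℚ_[p]) (y v : Fin N → ℚ_[p]) :
    dotp p N (fun i => y i + if i = a then t else 0) v = dotp p N y v + t * v a := by
  unfold dotp
  have h1 : ∀ i : Fin N, (y i + if i = a then t else 0) * v i
      = y i * v i + (if i = a then t * v i else 0) := by
    intro i; by_cases h : i = a <;> simp [h, add_mul]
  simp_rw [h1]
  rw [Finset.sum_add_distrib]
  congr 1
  rw [Finset.sum_ite_eq' Finset.univ a (fun i => t * v i)]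
  simp

include hrad in
lemma Asymb_ball (hμ1 : μ (Metric.closedBall 0 1) = 1)
    (l : ℕ) (j κ : Fin N → ℚ_[p]) (hj : (p:ℝ) ^ (-(l:ℤ)) < ‖j‖)
    (hκj : ‖κ - j‖ ≤ (p:ℝ) ^ (-(l:ℤ))) :
    Asymb p N μ χ w κ = Asymb p N μ χ w j := by
  classical
  have hp0 : (0:ℝ) < p := pR_pos p
  have hjnorm : 0 < ‖j‖ := lt_trans (by positivity) hj
  have hκnorm : ‖κ‖ = ‖j‖ := pnorm_eq_of_sub_lt p N (lt_of_le_of_lt hκj hj)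
  have hNe : Nonempty (Fin N) := by
    by_contra h
    rw [not_nonempty_iff] at h
    have : j = 0 := funext fun i => (h.false i).elim
    rw [this] at hjnorm; simp at hjnorm
  obtain ⟨a, -, ha⟩ := Finset.exists_mem_eq_sup (Finset.univ : Finset (Fin N))
    Finset.univ_nonempty (fun i => ‖j i‖₊)
  have hja : ‖j‖ = ‖j a‖ := by
    have := congrArg (fun t : ℝ≥0 => (t:ℝ)) (Pi.nnnorm_def j ▸ ha ▸ rfl : ‖j‖₊ = ‖j a‖₊)
    simpa using this
  set e : Fin N → ℚ_[p] := κ - j with he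
  have hea : e a = κ a - j a := rfl
  have henorm : ‖e‖ ≤ (p:ℝ) ^ (-(l:ℤ)) := hκj
  have hκa : ‖κ a‖ = ‖j a‖ := by
    refine qnorm_eq_of_sub_lt p ?_
    calc ‖κ a - j a‖ ≤ ‖κ - j‖ := by
          have := norm_le_pi_norm (κ - j) a
          simpa using this
      _ ≤ (p:ℝ) ^ (-(l:ℤ)) := hκj
      _ < ‖j‖ := hj
      _ = ‖j a‖ := hja
  have hja0 : j a ≠ 0 := by
    intro h; rw [h, norm_zero] at hja; exact absurd hja (ne_of_gt hjnorm)
  have hκa0 : κ a ≠ 0 := by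
    intro h
    rw [h, norm_zero] at hκa
    exact hja0 (norm_eq_zero.1 hκa.symm)
  set S : (Fin N → ℚ_[p]) → (Fin N → ℚ_[p]) :=
    fun y i => y i - if i = a then dotp p N y e / κ a else 0 with hS
  set R : (Fin N → ℚ_[p]) → (Fin N → ℚ_[p]) :=
    fun y i => y i + if i = a then dotp p N y e / j a else 0 with hR
  have hdS : ∀ y, dotp p N (S y) e = dotp p N y e * (j a / κ a) := by
    intro y
    have h0 : S y = fun i => y i - if i = a then dotp p N y e / κ a else 0 := rfl
    rw [h0, dotp_sub_single p N a (dotp p N y e / κ a) y e, hea]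
    field_simp
    ring
  have hdR : ∀ y, dotp p N (R y) e = dotp p N y e * (κ a / j a) := by
    intro y
    have h0 : R y = fun i => y i + if i = a then dotp p N y e / j a else 0 := rfl
    rw [h0, dotp_add_single p N a (dotp p N y e / j a) y e, hea]
    field_simp
    ring
  have hRS : ∀ y, R (S y) = y := by
    intro y
    funext i
    show (y i - if i = a then dotp p N y e / κ a else 0)
      + (if i = a then dotp p N (S y) e / j a else 0) = y i
    by_cases h : i = a
    · rw [if_pos h, if_pos h, hdS y]
      field_simp
      ring
    · rw [if_neg h, if_neg h]; ring
  have hSR : ∀ y, S (R y) = y := by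
    intro y
    funext i
    show (y i + if i = a then dotp p N y e / j a else 0)
      - (if i = a then dotp p N (R y) e / κ a else 0) = y i
    by_cases h : i = a
    · rw [if_pos h, if_pos h, hdR y]
      field_simp
      ring
    · rw [if_neg h, if_neg h]; ring
  have hSadd : ∀ x y, S (x + y) = S x + S y := by
    intro x y
    funext i
    show (x + y) i - (if i = a then dotp p N (x + y) e / κ a else 0)
      = (x i - if i = a then dotp p N x e / κ a else 0)
      + (y i - if i = a then dotp p N y e / κ a else 0)
    by_cases h : i = a
    · rw [if_pos h, if_pos h, if_pos h, dotp_add_left]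
      simp only [Pi.add_apply]
      ring
    · rw [if_neg h, if_neg h, if_neg h]
      simp only [Pi.add_apply]
      ring
  have hScont : Continuous S := by
    refine continuous_pi fun i => ?_
    by_cases h : i = a
    · have h0 : (fun y => S y i) = fun y => y i - dotp p N e y / κ a := by
        funext y
        show y i - (if i = a then dotp p N y e / κ a else 0) = _
        rw [if_pos h, dotp_comm]
      rw [h0]
      exact (continuous_apply i).sub ((dotp_continuous p N e).div_const _)
    · have h0 : (fun y => S y i) = fun y => y i := by
        funext y
        show y i - (if i = a then dotp p N y e / κ a else 0) = _
        rw [if_neg h, sub_zero]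
      rw [h0]
      exact continuous_apply i
  have hRcont : Continuous R := by
    refine continuous_pi fun i => ?_
    by_cases h : i = a
    · have h0 : (fun y => R y i) = fun y => y i + dotp p N e y / j a := by
        funext y
        show y i + (if i = a then dotp p N y e / j a else 0) = _
        rw [if_pos h, dotp_comm]
      rw [h0]
      exact (continuous_apply i).add ((dotp_continuous p N e).div_const _)
    · have h0 : (fun y => R y i) = fun y => y i := by
        funext y
        show y i + (if i = a then dotp p N y e / j a else 0) = _
        rw [if_neg h, add_zero]
      rw [h0]
      exact continuous_apply i
  have hSnorm : ∀ y, ‖S y‖ = ‖y‖ := by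
    intro y
    by_cases hy : y = 0
    · subst hy
      have hS0 : S 0 = 0 := by
        funext i
        show (0 : Fin N → ℚ_[p]) i - (if i = a then dotp p N (0 : Fin N → ℚ_[p]) e / κ a else 0)
          = (0 : Fin N → ℚ_[p]) i
        have hd0 : dotp p N (0 : Fin N → ℚ_[p]) e = 0 := by unfold dotp; simp
        by_cases h : i = a
        · rw [if_pos h, hd0]; simp
        · rw [if_neg h]; simp
      rw [hS0]
    · have hy0 : 0 < ‖y‖ := norm_pos_iff.2 hy
      have hsub : ‖S y - y‖ < ‖y‖ := by
        have heq : S y - y = fun i => -(if i = a then dotp p N y e / κ a else 0) := by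
          funext i
          show (y i - if i = a then dotp p N y e / κ a else 0) - y i = _
          ring
        have hle : ‖S y - y‖ ≤ ‖dotp p N y e / κ a‖ := by
          rw [heq]
          refine pi_norm_le_iff_of_nonneg (norm_nonneg _) |>.2 fun i => ?_
          by_cases h : i = a
          · rw [if_pos h, norm_neg]
          · rw [if_neg h, neg_zero, norm_zero]; exact norm_nonneg _
        refine lt_of_le_of_lt hle ?_
        rw [norm_div, hκa, ← hja]
        have hnum : ‖dotp p N y e‖ ≤ ‖y‖ * (p:ℝ) ^ (-(l:ℤ)) := by
          refine (dotp_norm_le p N y e).trans ?_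
          exact mul_le_mul_of_nonneg_left henorm (norm_nonneg _)
        calc ‖dotp p N y e‖ / ‖j‖ ≤ (‖y‖ * (p:ℝ) ^ (-(l:ℤ))) / ‖j‖ := by
              gcongr
          _ < (‖y‖ * ‖j‖) / ‖j‖ := by
              have hlt : ‖y‖ * (p:ℝ) ^ (-(l:ℤ)) < ‖y‖ * ‖j‖ := mul_lt_mul_of_pos_left hj hy0
              exact div_lt_div_of_pos_right hlt hjnorm
          _ = ‖y‖ := by field_simp
      exact pnorm_eq_of_sub_lt p N hsub
  -- the homeomorphism / additive equivalence
  set Seqv : (Fin N → ℚ_[p]) ≃ (Fin N → ℚ_[p]) := ⟨S, R, hRS, hSR⟩ with hSeqv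
  set Sh : (Fin N → ℚ_[p]) ≃ₜ (Fin N → ℚ_[p]) :=
    { toEquiv := Seqv, continuous_toFun := hScont, continuous_invFun := hRcont } with hSh
  set Sa : (Fin N → ℚ_[p]) ≃+ (Fin N → ℚ_[p]) :=
    { toEquiv := Seqv, map_add' := hSadd } with hSa
  haveI hHaar : (μ.map S).IsAddHaarMeasure := by
    have h1 := AddEquiv.isAddHaarMeasure_map μ Sa hScont hRcont
    have h2 : (⇑Sa : (Fin N → ℚ_[p]) → (Fin N → ℚ_[p])) = S := rfl
    rwa [h2] at h1
  have hfact := Measure.isAddLeftInvariant_eq_smul (μ.map S) μ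
  have hpre : S ⁻¹' (Metric.closedBall 0 1) = Metric.closedBall 0 1 := by
    ext y
    simp only [Set.mem_preimage, Metric.mem_closedBall, dist_eq_norm, sub_zero]
    rw [hSnorm y]
  have hmapball : (μ.map S) (Metric.closedBall 0 1) = 1 := by
    rw [Measure.map_apply hScont.measurable Metric.isClosed_closedBall.measurableSet, hpre, hμ1]
  have hc1 : Measure.addHaarScalarFactor (μ.map S) μ = 1 := by
    have h3 : (μ.map S) (Metric.closedBall 0 1)
        = (Measure.addHaarScalarFactor (μ.map S) μ • μ) (Metric.closedBall 0 1) := by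
      rw [← hfact]
    rw [hmapball, Measure.smul_apply, hμ1] at h3
    have h4 : ((Measure.addHaarScalarFactor (μ.map S) μ : ℝ≥0) : ℝ≥0∞) = 1 := by
      simpa [ENNReal.smul_def] using h3.symm
    exact_mod_cast h4
  have hmapμ : μ.map S = μ := by rw [hfact, hc1, one_smul]
  have hmp : MeasurePreserving S μ μ := ⟨hScont.measurable, hmapμ⟩
  have hme : MeasurableEmbedding S := Sh.measurableEmbedding
  have hint := hmp.integral_comp hme (fun y => (1 - χ (dotp p N y κ)) / ((w y : ℝ) : ℂ))
  unfold Asymb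
  rw [← hint]
  congr 1
  funext y
  have hdot : dotp p N (S y) κ = dotp p N y j := by
    have h0 : S y = fun i => y i - if i = a then dotp p N y e / κ a else 0 := rfl
    rw [h0, dotp_sub_single p N a (dotp p N y e / κ a) y κ]
    rw [div_mul_cancel₀ _ hκa0, ← dotp_sub_right]
    congr 1
    rw [he]
    ring
  show (1 - χ (dotp p N (S y) κ)) / ((w (S y) : ℝ) : ℂ) = _
  rw [hdot, hrad (S y) y (hSnorm y)]
end AsymbSec

/-- on the mean-zero discrete fields `L_ℝ^l`, the form `B` is the
quadratic form of the diagonal matrix `2p^{-lN}B(l)⁻¹` in the coordinates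
`(φ̂_1(j), φ̂_2(j))_{j∈G_l^+}`. -/
theorem statement10
    (p : ℕ) [Fact p.Prime] (hp3 : 3 ≤ p) (N : ℕ) (hN : 1 ≤ N)
    (μ : Measure (Fin N → ℚ_[p])) [μ.IsAddHaarMeasure]
    (hμ1 : μ (Metric.closedBall 0 1) = 1)
    (δ : ℝ) (hδ : (N : ℝ) < δ)
    (w : (Fin N → ℚ_[p]) → ℝ)
    (hw0 : ∀ y, 0 ≤ w y)
    (hrad : ∀ x y : Fin N → ℚ_[p], ‖x‖ = ‖y‖ → w x = w y)
    (hcont : Continuous w)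
    (hmono : ∀ x y : Fin N → ℚ_[p], ‖x‖ ≤ ‖y‖ → w x ≤ w y)
    (hzero : ∀ y : Fin N → ℚ_[p], w y = 0 ↔ y = 0)
    (C₀ C₁ : ℝ) (hC₀ : 0 < C₀) (hC₁ : 0 < C₁)
    (hlow : ∀ y : Fin N → ℚ_[p], C₀ * ‖y‖ ^ δ ≤ w y)
    (hupp : ∀ y : Fin N → ℚ_[p], w y ≤ C₁ * ‖y‖ ^ δ)
    (χ : ℚ_[p] → ℂ)
    (hχ_add : ∀ a b, χ (a + b) = χ a * χ b)
    (hχ_ker : ∀ a : ℚ_[p], χ a = 1 ↔ ‖a‖ ≤ 1)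
    (hχ_abs : ∀ a : ℚ_[p], ‖χ a‖ = 1)
    (γ α₂ : ℝ) (hγ : 0 < γ) (hα₂ : 0 < α₂)
    (l : ℕ) (hl : 1 ≤ l)
    (G : Finset (Fin N → ℚ_[p]))
    (hGmem : ∀ i ∈ G, ‖i‖ ≤ (p : ℝ) ^ (l : ℤ))
    (hGcov : ∀ x : Fin N → ℚ_[p], ‖x‖ ≤ (p : ℝ) ^ (l : ℤ) →
      ∃ i ∈ G, ‖x - i‖ ≤ (p : ℝ) ^ (-(l : ℤ)))
    (hGsep : ∀ i ∈ G, ∀ j ∈ G, i ≠ j → (p : ℝ) ^ (-(l : ℤ)) < ‖i - j‖)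
    (hG0 : (0 : Fin N → ℚ_[p]) ∈ G)
    (hGneg : ∀ i ∈ G, -i ∈ G)
    (Gplus : Finset (Fin N → ℚ_[p]))
    (hGpsub : ∀ j ∈ Gplus, j ∈ G ∧ j ≠ 0)
    (hGpsplit : ∀ i ∈ G, i ≠ 0 → (i ∈ Gplus ∧ -i ∉ Gplus) ∨ (i ∉ Gplus ∧ -i ∈ Gplus))
    (c : (Fin N → ℚ_[p]) → ℝ)
    (hmean : ∫ x, phiFun p N l G c x ∂μ = 0) :
    Bint p N μ χ w γ α₂ (phiFun p N l G c) (phiFun p N l G c) =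
      2 * ((p : ℂ) ^ (l * N))⁻¹ *
        ∑ j ∈ Gplus,
          ((((hatCoef p N l G χ c j).re : ℝ) : ℂ) ^ 2 +
              (((hatCoef p N l G χ c j).im : ℝ) : ℂ) ^ 2) /
            ((γ : ℂ) / 2 * Asymb p N μ χ w j + (α₂ : ℂ) / 2) := by

  classical
  have hp0 : (0:ℝ) < p := pR_pos p
  have hp1 : (1:ℝ) < p := one_lt_pR p
  set ρ : ℝ := (p:ℝ) ^ (-(l:ℤ)) with hρ
  set Pl : ℝ := (p:ℝ) ^ (l:ℤ) with hPl
  have hρPl : ρ ≤ Pl := by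
    rw [hρ, hPl]
    exact zpow_le_zpow_right₀ hp1.le (by omega)
  have hsumc : ∑ i ∈ G, c i = 0 := sum_c_zero p N l μ χ hχ_add hχ_ker hμ1 G c hmean
  have hhat0 : hatCoef p N l G χ c 0 = 0 := by
    unfold hatCoef
    have h1 : ∀ i ∈ G, (c i : ℂ) * χ (dotp p N i 0) = (c i : ℂ) := by
      intro i _
      have hd : dotp p N i 0 = 0 := by unfold dotp; simp
      rw [hd, chi_zero χ hχ_ker, mul_one]
    rw [Finset.sum_congr rfl h1]
    have h2 : (∑ i ∈ G, (c i : ℂ)) = ((∑ i ∈ G, c i : ℝ) : ℂ) := by push_cast; rfl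
    rw [h2, hsumc]
    simp
  have hcast : ((((p:ℝ) ^ (l*N))⁻¹ : ℝ) : ℂ) = ((p:ℂ) ^ (l*N))⁻¹ := by push_cast; rfl
  have hFTrG : ∀ j ∈ G, FTr p N μ χ (phiFun p N l G c) j = hatCoef p N l G χ c j := by
    intro j hj
    rw [FTr_phi_le p N l μ χ hχ_add hχ_ker hμ1 G c j (hGmem j hj)]
    unfold hatCoef
    rw [mul_comm, hcast]
    congr 1
    refine Finset.sum_congr rfl fun i _ => ?_
    rw [dotp_comm]
  have hFTreq : ∀ j ∈ G, ∀ κ, κ ∈ Metric.closedBall j ρ →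
      FTr p N μ χ (phiFun p N l G c) κ = FTr p N μ χ (phiFun p N l G c) j := by
    intro j hj κ hκ
    rw [Metric.mem_closedBall, dist_eq_norm] at hκ
    have hκle : ‖κ‖ ≤ Pl := by
      calc ‖κ‖ = ‖(κ - j) + j‖ := by ring_nf
        _ ≤ max ‖κ - j‖ ‖j‖ := pnorm_add_le p N _ _
        _ ≤ Pl := max_le (hκ.trans hρPl) (hGmem j hj)
    rw [FTr_phi_le p N l μ χ hχ_add hχ_ker hμ1 G c κ hκle,
      FTr_phi_le p N l μ χ hχ_add hχ_ker hμ1 G c j (hGmem j hj)]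
    congr 1
    refine Finset.sum_congr rfl fun i hi => ?_
    congr 1
    refine chi_eq_of_close χ hχ_add hχ_ker _ _ ?_
    have hd : dotp p N κ i - dotp p N j i = dotp p N (κ - j) i := by
      rw [dotp_comm p N κ i, dotp_comm p N j i, ← dotp_sub_right, dotp_comm]
    rw [hd]
    calc ‖dotp p N (κ - j) i‖ ≤ ‖κ - j‖ * ‖i‖ := dotp_norm_le p N _ _
      _ ≤ ρ * Pl := mul_le_mul hκ (hGmem i hi) (norm_nonneg _) (by positivity)
      _ = 1 := by rw [hρ, hPl, ← zpow_add₀ (ne_of_gt hp0)]; simp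
  have hdisj : ∀ j₁ ∈ G, ∀ j₂ ∈ G, j₁ ≠ j₂ → ∀ κ, κ ∈ Metric.closedBall j₁ ρ →
      κ ∉ Metric.closedBall j₂ ρ := by
    intro j₁ h₁ j₂ h₂ hne κ hκ1 hκ2
    rw [Metric.mem_closedBall, dist_eq_norm] at hκ1 hκ2
    have hle : ‖j₁ - j₂‖ ≤ ρ := by
      calc ‖j₁ - j₂‖ = ‖(-(κ - j₁)) + (κ - j₂)‖ := by ring_nf
        _ ≤ max ‖-(κ - j₁)‖ ‖κ - j₂‖ := pnorm_add_le p N _ _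
        _ ≤ ρ := by rw [norm_neg]; exact max_le hκ1 hκ2
    exact absurd hle (not_le.2 (hGsep j₁ h₁ j₂ h₂ hne))
  unfold Bint
  set g : (Fin N → ℚ_[p]) → ℂ := fun κ =>
    FTr p N μ χ (phiFun p N l G c) κ *
      (starRingEnd ℂ) (FTr p N μ χ (phiFun p N l G c) κ) /
      ((γ : ℂ) / 2 * Asymb p N μ χ w κ + (α₂ : ℂ) / 2) with hg
  have hpt : ∀ κ, g κ = ∑ j ∈ G, (Metric.closedBall j ρ).indicator (fun _ => g j) κ := by
    intro κ
    by_cases hex : ∃ j ∈ G, κ ∈ Metric.closedBall j ρ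
    · obtain ⟨j, hjG, hκj⟩ := hex
      rw [Finset.sum_eq_single_of_mem j hjG]
      · rw [Set.indicator_of_mem hκj]
        by_cases hj0 : j = 0
        · have hFj : FTr p N μ χ (phiFun p N l G c) j = 0 := by
            rw [hFTrG j hjG, hj0, hhat0]
          have hFκ : FTr p N μ χ (phiFun p N l G c) κ = 0 := by
            rw [hFTreq j hjG κ hκj, hFj]
          rw [hg]
          simp only [hFκ, hFj]
          simp
        · have hjn : ρ < ‖j‖ := by
            have := hGsep j hjG 0 hG0 hj0
            simpa using this
          have hAs : Asymb p N μ χ w κ = Asymb p N μ χ w j :=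
            Asymb_ball p N μ χ w hrad hμ1 l j κ hjn
              (by rw [Metric.mem_closedBall, dist_eq_norm] at hκj; exact hκj)
          rw [hg]
          simp only [hFTreq j hjG κ hκj, hAs]
      · intro j₂ hj₂ hne
        exact Set.indicator_of_notMem (hdisj j hjG j₂ hj₂ (Ne.symm hne) κ hκj) _
    · push_neg at hex
      have hκgt : ¬ ‖κ‖ ≤ Pl := by
        intro hle
        obtain ⟨i, hiG, hi⟩ := hGcov κ hle
        exact hex i hiG (by rw [Metric.mem_closedBall, dist_eq_norm]; exact hi)
      have hFκ : FTr p N μ χ (phiFun p N l G c) κ = 0 :=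
        FTr_phi_gt p N l μ χ hχ_add hχ_ker G c κ hκgt
      rw [hg]
      simp only [hFκ]
      rw [Finset.sum_eq_zero]
      · simp
      · intro j hj
        exact Set.indicator_of_notMem (hex j hj) _
  have hpne : ((p:ℝ≥0∞) ^ (l*N)) ≠ 0 := by
    refine pow_ne_zero _ ?_
    exact_mod_cast (Nat.Prime.ne_zero Fact.out : p ≠ 0)
  have hzz : ∀ z : ℂ, z * (starRingEnd ℂ) z = ((z.re:ℝ):ℂ)^2 + ((z.im:ℝ):ℂ)^2 := by
    intro z
    rw [Complex.mul_conj, Complex.normSq_apply]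
    push_cast
    ring
  have hhatneg : ∀ j, hatCoef p N l G χ c (-j) =
      (starRingEnd ℂ) (hatCoef p N l G χ c j) := by
    intro j
    unfold hatCoef
    rw [map_mul, map_inv₀, map_pow, Complex.conj_natCast, map_sum]
    congr 1
    refine Finset.sum_congr rfl fun i _ => ?_
    rw [map_mul, Complex.conj_ofReal]
    congr 1
    rw [dotp_neg_right, chi_neg χ hχ_add hχ_ker hχ_abs]
  calc ∫ κ, g κ ∂μ
      = ∫ κ, ∑ j ∈ G, (Metric.closedBall j ρ).indicator (fun _ => g j) κ ∂μ := by
        congr 1; funext κ; exact hpt κ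
    _ = ∑ j ∈ G, ∫ κ, (Metric.closedBall j ρ).indicator (fun _ => g j) κ ∂μ := by
        refine integral_finset_sum _ fun j _ => ?_
        rw [integrable_indicator_iff Metric.isClosed_closedBall.measurableSet]
        refine integrableOn_const (ne_of_lt ?_)
        rw [measure_cball_translate p N μ j ρ, hρ, measure_smallball p N l μ hμ1]
        exact ENNReal.inv_lt_top.2 (pos_iff_ne_zero.2 hpne)
    _ = ∑ j ∈ G, (((p:ℝ) ^ (l*N))⁻¹ : ℝ) • g j := by
        refine Finset.sum_congr rfl fun j _ => ?_
        rw [integral_indicator_const _ Metric.isClosed_closedBall.measurableSet, measureReal_def,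
          measure_cball_translate p N μ j ρ, hρ, measure_smallball p N l μ hμ1]
        congr 1
        simp [ENNReal.toReal_inv, ENNReal.toReal_pow]
    _ = ∑ j ∈ G.erase 0, (((p:ℝ) ^ (l*N))⁻¹ : ℝ) • g j := by
        refine (Finset.sum_erase _ ?_).symm
        have hF0 : FTr p N μ χ (phiFun p N l G c) 0 = 0 := by rw [hFTrG 0 hG0, hhat0]
        rw [hg]
        simp [hF0]
    _ = ∑ j ∈ G.erase 0, (((p:ℝ) ^ (l*N))⁻¹ : ℝ) •
          (hatCoef p N l G χ c j * (starRingEnd ℂ) (hatCoef p N l G χ c j) /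
            ((γ : ℂ) / 2 * Asymb p N μ χ w j + (α₂ : ℂ) / 2)) := by
        refine Finset.sum_congr rfl fun j hj => ?_
        rw [hg]
        simp only [hFTrG j (Finset.mem_of_mem_erase hj)]
    _ = 2 * ((p : ℂ) ^ (l * N))⁻¹ * ∑ j ∈ Gplus,
          ((((hatCoef p N l G χ c j).re : ℝ) : ℂ) ^ 2 +
              (((hatCoef p N l G χ c j).im : ℝ) : ℂ) ^ 2) /
            ((γ : ℂ) / 2 * Asymb p N μ χ w j + (α₂ : ℂ) / 2) := by
        have hsplit : G.erase 0 = Gplus ∪ Gplus.image (fun j => -j) := by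
          ext i
          simp only [Finset.mem_erase, Finset.mem_union, Finset.mem_image]
          constructor
          · rintro ⟨hne, hiG⟩
            rcases hGpsplit i hiG hne with ⟨h1, _⟩ | ⟨_, h2⟩
            · exact Or.inl h1
            · exact Or.inr ⟨-i, h2, neg_neg i⟩
          · rintro (h | ⟨b, hb, rfl⟩)
            · exact ⟨(hGpsub i h).2, (hGpsub i h).1⟩
            · obtain ⟨hbG, hb0⟩ := hGpsub b hb
              exact ⟨neg_ne_zero.2 hb0, hGneg b hbG⟩
        have hdisj2 : Disjoint Gplus (Gplus.image (fun j => -j)) := by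
          rw [Finset.disjoint_left]
          intro i hi hmem
          rw [Finset.mem_image] at hmem
          obtain ⟨b, hb, hbi⟩ := hmem
          obtain ⟨hbG, hb0⟩ := hGpsub b hb
          rcases hGpsplit b hbG hb0 with ⟨_, h2⟩ | ⟨h1, _⟩
          · exact h2 (hbi ▸ hi)
          · exact h1 hb
        rw [hsplit, Finset.sum_union hdisj2,
          Finset.sum_image (fun x _ y _ h => neg_injective h)]
        have hterm : ∀ j ∈ Gplus,
            (((p:ℝ) ^ (l*N))⁻¹ : ℝ) •
              (hatCoef p N l G χ c (-j) * (starRingEnd ℂ) (hatCoef p N l G χ c (-j)) /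
                ((γ : ℂ) / 2 * Asymb p N μ χ w (-j) + (α₂ : ℂ) / 2)) =
            (((p:ℝ) ^ (l*N))⁻¹ : ℝ) •
              (hatCoef p N l G χ c j * (starRingEnd ℂ) (hatCoef p N l G χ c j) /
                ((γ : ℂ) / 2 * Asymb p N μ χ w j + (α₂ : ℂ) / 2)) := by
          intro j _
          rw [hhatneg j, Complex.conj_conj, Asymb_neg p N μ χ w hrad j,
            mul_comm ((starRingEnd ℂ) (hatCoef p N l G χ c j)) (hatCoef p N l G χ c j)]
        rw [Finset.sum_congr rfl hterm, ← two_smul ℂ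
          (∑ j ∈ Gplus, (((p:ℝ) ^ (l*N))⁻¹ : ℝ) •
            (hatCoef p N l G χ c j * (starRingEnd ℂ) (hatCoef p N l G χ c j) /
              ((γ : ℂ) / 2 * Asymb p N μ χ w j + (α₂ : ℂ) / 2)))]
        rw [smul_eq_mul]
        conv_rhs => rw [mul_assoc, Finset.mul_sum]
        congr 1
        refine Finset.sum_congr rfl fun j _ => ?_
        rw [Complex.real_smul, hcast, hzz (hatCoef p N l G χ c j)]
end

section
/- Let Ω(p^{-l}‖·‖_p) denote the characteristic function of the ball B_l^N and set c_l = ∫_{ℚ_p^N∖B_l^N} d^N y / w_δ(‖y‖_p). Then: (i) for every x ∈ B_l^N, W_δ(Ω(p^{-l}‖·‖_p))(x) = −c_l; and (ii) for any α_2 ∈ ℝ and α_4 > 0, a constant field φ = φ_0·Ω(p^{-l}‖·‖_p) (φ_0 ∈ ℝ) satisfies the motion equation −(γ/2)W_δφ(x) + (α_2 − (γ/2)c_l)·φ(x) + α_4·φ(x)³ = 0 for all x ∈ B_l^N if and only if φ_0(α_4φ_0² + α_2) = 0; in particular, for α_2 < 0 the nonzero constant minimizing fields are φ_0 = ±√(−α_2/α_4)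 (spontaneous symmetry breaking below the critical temperature). -/
open MeasureTheory Filter

/-- The operator `W_δ`. -/
noncomputable def Wop (p N : ℕ) [Fact p.Prime] (μ : Measure (Fin N → ℚ_[p]))
    (w : (Fin N → ℚ_[p]) → ℝ) (φ : (Fin N → ℚ_[p]) → ℝ) (x : Fin N → ℚ_[p]) : ℝ :=
  ∫ y, (φ (x - y) - φ x) / w y ∂μ

/-- The characteristic function of the ball `B_l^N`. -/
noncomputable def bigBallInd (p N : ℕ) [Fact p.Prime] (l : ℕ) (x : Fin N → ℚ_[p]) : ℝ :=
  Set.indicator {y : Fin N → ℚ_[p] | ‖y‖ ≤ (p : ℝ) ^ (l : ℤ)} (fun _ => (1 : ℝ)) x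

/-- The constant `c_l = ∫_{ℚ_p^N ∖ B_l^N} d^N y / w_δ(‖y‖_p)`. -/
noncomputable def cConst (p N : ℕ) [Fact p.Prime] (μ : Measure (Fin N → ℚ_[p]))
    (w : (Fin N → ℚ_[p]) → ℝ) (l : ℕ) : ℝ :=
  ∫ y in {y : Fin N → ℚ_[p] | ¬‖y‖ ≤ (p : ℝ) ^ (l : ℤ)}, (w y)⁻¹ ∂μ

/-- The ultrametric inequality for the sup norm on `Fin N → ℚ_[p]`. -/
lemma pi_padic_norm_sub_le_max (p N : ℕ) [Fact p.Prime] (x y : Fin N → ℚ_[p]) :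
    ‖x - y‖ ≤ max ‖x‖ ‖y‖ := by
  rcases isEmpty_or_nonempty (Fin N) with h | h
  · simp [Subsingleton.elim (x - y) 0, le_max_iff, norm_nonneg]
  · refine pi_norm_le_iff_of_nonneg (le_max_iff.2 (Or.inl (norm_nonneg _))) |>.2 fun i => ?_
    calc ‖(x - y) i‖ = ‖x i + (-(y i))‖ := by simp [sub_eq_add_neg]
    _ ≤ max ‖x i‖ ‖-(y i)‖ := Padic.nonarchimedean _ _
    _ ≤ max ‖x‖ ‖y‖ := by
        simp only [norm_neg]
        exact max_le_max (norm_le_pi_norm _ _) (norm_le_pi_norm _ _)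

/-- `W_δ` of the characteristic function of `B_l^N`, the motion equation
for constant fields, and spontaneous symmetry breaking below the critical temperature. -/
theorem statement19
    (p : ℕ) [Fact p.Prime] (hp3 : 3 ≤ p) (N : ℕ) (hN : 1 ≤ N)
    (μ : Measure (Fin N → ℚ_[p])) [μ.IsAddHaarMeasure]
    (hμ1 : μ (Metric.closedBall 0 1) = 1)
    (δ : ℝ) (hδ : (N : ℝ) < δ)
    (w : (Fin N → ℚ_[p]) → ℝ)
    (hw0 : ∀ y, 0 ≤ w y)
    (hrad : ∀ x y : Fin N → ℚ_[p], ‖x‖ = ‖y‖ → w x = w y)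
    (hcont : Continuous w)
    (hmono : ∀ x y : Fin N → ℚ_[p], ‖x‖ ≤ ‖y‖ → w x ≤ w y)
    (hzero : ∀ y : Fin N → ℚ_[p], w y = 0 ↔ y = 0)
    (C₀ C₁ : ℝ) (hC₀ : 0 < C₀) (hC₁ : 0 < C₁)
    (hlow : ∀ y : Fin N → ℚ_[p], C₀ * ‖y‖ ^ δ ≤ w y)
    (hupp : ∀ y : Fin N → ℚ_[p], w y ≤ C₁ * ‖y‖ ^ δ)
    (γ : ℝ) (hγ : 0 < γ)
    (l : ℕ) (hl : 1 ≤ l) :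
    -- (i)
    (∀ x : Fin N → ℚ_[p], ‖x‖ ≤ (p : ℝ) ^ (l : ℤ) →
      Wop p N μ w (bigBallInd p N l) x = -cConst p N μ w l) ∧
    -- (ii) constant fields solving the motion equation
    (∀ (α₂ : ℝ) (α₄ : ℝ), 0 < α₄ → ∀ φ₀ : ℝ,
      ((∀ x : Fin N → ℚ_[p], ‖x‖ ≤ (p : ℝ) ^ (l : ℤ) →
          -(γ / 2) * Wop p N μ w (fun y => φ₀ * bigBallInd p N l y) x +
              (α₂ - γ / 2 * cConst p N μ w l) * (φ₀ * bigBallInd p N l x) +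
              α₄ * (φ₀ * bigBallInd p N l x) ^ 3 = 0) ↔
        φ₀ * (α₄ * φ₀ ^ 2 + α₂) = 0)) ∧
    -- spontaneous symmetry breaking: for `α₂ < 0` the nonzero constant solutions are
    -- `±√(−α₂/α₄)`
    (∀ (α₂ : ℝ) (α₄ : ℝ), 0 < α₄ → α₂ < 0 → ∀ φ₀ : ℝ, φ₀ ≠ 0 →
      (φ₀ * (α₄ * φ₀ ^ 2 + α₂) = 0 ↔
        φ₀ = Real.sqrt (-α₂ / α₄) ∨ φ₀ = -Real.sqrt (-α₂ / α₄))) := by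
  set R : ℝ := (p : ℝ) ^ (l : ℤ) with hR
  have hRpos : (0 : ℝ) < R := by positivity
  -- measurability of the complement of the ball
  have hSball : MeasurableSet {y : Fin N → ℚ_[p] | ‖y‖ ≤ R} :=
    measurableSet_le continuous_norm.measurable measurable_const
  have hS : MeasurableSet {y : Fin N → ℚ_[p] | ¬‖y‖ ≤ R} := by
    have := hSball.compl
    convert this using 1
    rfl
  -- the indicator is 1 on the ball
  have hind1 : ∀ x : Fin N → ℚ_[p], ‖x‖ ≤ R → bigBallInd p N l x = 1 := by
    intro x hx
    exact Set.indicator_of_mem hx fun _ => 1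
  -- Part (i)
  have part1 : ∀ x : Fin N → ℚ_[p], ‖x‖ ≤ R →
      Wop p N μ w (bigBallInd p N l) x = -cConst p N μ w l := by
    intro x hx
    have key : ∀ y : Fin N → ℚ_[p],
        (bigBallInd p N l (x - y) - bigBallInd p N l x) / w y =
          -(Set.indicator {y : Fin N → ℚ_[p] | ¬‖y‖ ≤ R} (fun y => (w y)⁻¹) y) := by
      intro y
      by_cases hy : ‖y‖ ≤ R
      · have hxy : ‖x - y‖ ≤ R := le_trans (pi_padic_norm_sub_le_max p N x y) (max_le hx hy)
        rw [hind1 x hx, hind1 _ hxy, Set.indicator_of_notMem (show y ∉ {y : Fin N → ℚ_[p] | ¬‖y‖ ≤ R} from not_not_intro hy)]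
        simp
      · have hxy : ¬‖x - y‖ ≤ R := by
          intro hc
          apply hy
          have : y = x - (x - y) := by ring
          rw [this]
          exact le_trans (pi_padic_norm_sub_le_max p N x (x - y)) (max_le hx hc)
        rw [hind1 x hx, Set.indicator_of_mem (show y ∈ {y : Fin N → ℚ_[p] | ¬‖y‖ ≤ R} from hy) (fun y => (w y)⁻¹)]
        have : bigBallInd p N l (x - y) = 0 := by
          unfold bigBallInd
          exact Set.indicator_of_notMem hxy (fun _ => (1 : ℝ))
        rw [this]
        ring
    rw [Wop]
    calc (∫ y, (bigBallInd p N l (x - y) - bigBallInd p N l x) / w y ∂μ)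
        = ∫ y, -(Set.indicator {y : Fin N → ℚ_[p] | ¬‖y‖ ≤ R} (fun y => (w y)⁻¹) y) ∂μ := by
          exact integral_congr_ae (Eventually.of_forall key)
      _ = -∫ y, Set.indicator {y : Fin N → ℚ_[p] | ¬‖y‖ ≤ R} (fun y => (w y)⁻¹) y ∂μ :=
          integral_neg _
      _ = -cConst p N μ w l := by rw [integral_indicator hS]; rfl
  refine ⟨part1, ?_, ?_⟩
  · -- Part (ii)
    intro α₂ α₄ hα₄ φ₀
    -- Wop is homogeneous
    have hWhom : ∀ x : Fin N → ℚ_[p],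
        Wop p N μ w (fun y => φ₀ * bigBallInd p N l y) x =
          φ₀ * Wop p N μ w (bigBallInd p N l) x := by
      intro x
      rw [Wop, Wop, ← integral_const_mul]
      exact integral_congr_ae (Eventually.of_forall fun y => by ring)
    constructor
    · intro h
      have h0 : ‖(0 : Fin N → ℚ_[p])‖ ≤ R := by
        rw [norm_zero]; exact hRpos.le
      have := h 0 h0
      rw [hWhom 0, part1 0 h0, hind1 0 h0] at this
      linear_combination this
    · intro h x hx
      rw [hWhom x, part1 x hx, hind1 x hx]
      linear_combination h
  · -- Part (iii)
    intro α₂ α₄ hα₄ hα₂ φ₀ hφ₀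
    have hs : (0 : ℝ) ≤ -α₂ / α₄ := div_nonneg (by linarith) hα₄.le
    have hsq : Real.sqrt (-α₂ / α₄) ^ 2 = -α₂ / α₄ := Real.sq_sqrt hs
    constructor
    · intro h
      have h2 : α₄ * φ₀ ^ 2 + α₂ = 0 := by
        rcases mul_eq_zero.1 h with h' | h'
        · exact absurd h' hφ₀
        · exact h'
      have hφ2 : φ₀ ^ 2 = -α₂ / α₄ := by
        field_simp
        linear_combination h2
      have : (φ₀ - Real.sqrt (-α₂ / α₄)) * (φ₀ + Real.sqrt (-α₂ / α₄)) = 0 := by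
        have h3 : φ₀ ^ 2 - Real.sqrt (-α₂ / α₄) ^ 2 = 0 := by rw [hφ2, hsq]; ring
        linear_combination h3
      rcases mul_eq_zero.1 this with h' | h'
      · left; linarith
      · right; linarith
    · intro h
      have hz : α₄ * (-α₂ / α₄) + α₂ = 0 := by
        field_simp
        ring
      rcases h with h | h <;> subst h
      · rw [hsq, hz, mul_zero]
      · rw [neg_sq, hsq, hz, mul_zero]
end
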